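/- Assume Σ_{t=0}^{∞} t · vol Y^t < ∞ and vol X^∞ = vol cl(X^∞). Then there exists T₀ ∈ ℕ such that for all integers T ≥ T₀: the primal LP admits an optimal solution whose second component is μ* = λ_{X^∞}, every optimal solution has this same second component μ* = λ_{X^∞}, and the optimal value satisfies p^T = vol X^∞. -/

import Mathlib

open MeasureTheory
open scoped ENNReal

/-- Feasibility for the primal LP. -/
def PrimalFeasible (n : ℕ) (f : (Fin n → ℝ) → (Fin n → ℝ))
    (X0 X : Set (Fin n → ℝ)) (T : ℕ)
    (μ₀ μ μh ν : Measure (Fin n → ℝ)) (a : ℝ≥0∞) : Prop :=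
  IsFiniteMeasure μ₀ ∧ IsFiniteMeasure μ ∧ IsFiniteMeasure μh ∧ IsFiniteMeasure ν ∧
  μ₀ X0ᶜ = 0 ∧ μ Xᶜ = 0 ∧ μh Xᶜ = 0 ∧ ν Xᶜ = 0 ∧
  ν Set.univ + a = (T : ℝ≥0∞) * volume X ∧
  μ + ν = Measure.map f ν + μ₀ ∧
  μ + μh = volume.restrict X

/-- Optimal value of the primal LP. -/
noncomputable def primalValue (n : ℕ) (f : (Fin n → ℝ) → (Fin n → ℝ))
    (X0 X : Set (Fin n → ℝ)) (T : ℕ) : ℝ≥0∞ :=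
  sSup {m : ℝ≥0∞ | ∃ μ₀ μ μh ν a, PrimalFeasible n f X0 X T μ₀ μ μh ν a ∧
    m = μ Set.univ}

/-!
Write `K` for the closure of the reachable set `X^∞`. Since `f` is continuous, `K` is forward
invariant, so evaluating the Liouville equation `μ + ν = f_#ν + μ₀` on `Kᶜ` gives
`μ Kᶜ + ν Kᶜ = ν (f⁻¹' Kᶜ) ≤ ν Kᶜ`, i.e. `μ Kᶜ = 0`. Together with `μ ≤ λ_X` this yields
`μ ≤ λ_K`, hence `p^T ≤ vol K = vol X^∞`, and a feasible `μ` of mass `vol K` must be `λ_K`,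
which is `λ_{X^∞}`.

Conversely, each `λ_{Y^t}` is the image under `f^t` of a measure `σ_t` on `X⁰`: for a `C¹` map
the critical values are Lebesgue-null, and off the critical set `f^t` is locally injective, so it
is injective on a Borel set whose image carries all of `λ_{Y^t}`. Then `μ₀ = ∑ σ_t` and
`ν = ∑_t ∑_{s<t} f^s_# σ_t` solve the Liouville equation with `μ = λ_{X^∞}` by telescoping, and
`ν` has mass `∑ t · vol Y^t`, which is at most `T · vol X` once `T` is large.
-/

open Set

theorem MvPolynomial.contDiff_eval {n : ℕ} {k : WithTop ℕ∞} (p : MvPolynomial (Fin n) ℝ) :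
    ContDiff ℝ k fun x : Fin n → ℝ => eval x p := by
  induction p using MvPolynomial.induction_on with
  | C a => simpa using contDiff_const
  | add p q hp hq => simpa using hp.add hq
  | mul_X p i hp => simpa using hp.mul (contDiff_apply ℝ ℝ i)

theorem ContDiff.iterate {𝕜 E : Type*} [NontriviallyNormedField 𝕜] [NormedAddCommGroup E]
    [NormedSpace 𝕜 E] {k : WithTop ℕ∞} {f : E → E} (hf : ContDiff 𝕜 k f) (t : ℕ) :
    ContDiff 𝕜 k f^[t] := by
  induction t with
  | zero => exact contDiff_id
  | succ t ih => exact ih.comp hf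

theorem exists_countable_isOpen_injOn_cover {α β : Type*} [TopologicalSpace α]
    [SecondCountableTopology α] {F : α → β} {s : Set α}
    (h : ∀ x ∈ s, ∃ U, IsOpen U ∧ x ∈ U ∧ InjOn F U) :
    ∃ U : ℕ → Set α, (∀ i, IsOpen (U i)) ∧ (∀ i, InjOn F (U i)) ∧ s ⊆ ⋃ i, U i := by
  obtain ⟨T, hTc, hTS, hTU⟩ := TopologicalSpace.isOpen_sUnion_countable
    {U : Set α | IsOpen U ∧ InjOn F U} fun U hU => hU.1
  obtain ⟨U, hU⟩ := (hTc.insert ∅).exists_eq_range (insert_nonempty _ _)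
  have hUgood : ∀ i, IsOpen (U i) ∧ InjOn F (U i) := by
    intro i
    rcases (hU ▸ mem_range_self i : U i ∈ insert ∅ T) with h0 | hT
    · simp [h0]
    · exact hTS hT
  refine ⟨U, fun i => (hUgood i).1, fun i => (hUgood i).2, fun x hx => ?_⟩
  obtain ⟨V, hVopen, hxV, hVinj⟩ := h x hx
  have hxT : x ∈ ⋃₀ T :=
    hTU ▸ mem_sUnion_of_mem hxV (show V ∈ {U | IsOpen U ∧ InjOn F U} from ⟨hVopen, hVinj⟩)
  obtain ⟨W, hWT, hxW⟩ := mem_sUnion.1 hxT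
  obtain ⟨i, rfl⟩ : W ∈ range U := hU ▸ mem_insert_of_mem ∅ hWT
  exact mem_iUnion_of_mem i hxW

section Pullback

variable {α β : Type*} [TopologicalSpace α] [PolishSpace α] [MeasurableSpace α] [BorelSpace α]
  [TopologicalSpace β] [T2Space β] [MeasurableSpace β] [BorelSpace β] {F : α → β}

theorem exists_measurableSet_injOn_image_eq_iUnion (hF : Continuous F) {s : ℕ → Set α}
    (hs : ∀ i, MeasurableSet (s i)) (hinj : ∀ i, InjOn F (s i)) :
    ∃ S ⊆ ⋃ i, s i, MeasurableSet S ∧ InjOn F S ∧ F '' S = ⋃ i, F '' s i := by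
  set D := disjointed fun i => F '' s i
  have hD : ∀ i, MeasurableSet (D i) := MeasurableSet.disjointed fun i =>
    (hs i).image_of_continuousOn_injOn hF.continuousOn (hinj i)
  refine ⟨⋃ i, s i ∩ F ⁻¹' D i, iUnion_mono fun i => inter_subset_left,
    .iUnion fun i => (hs i).inter (hF.measurable (hD i)), ?_, ?_⟩
  · -- distinct pieces have disjoint images
    rintro x hx y hy hxy
    obtain ⟨i, hxi, hxD⟩ := mem_iUnion.1 hx
    obtain ⟨j, hyj, hyD⟩ := mem_iUnion.1 hy
    obtain rfl : i = j := by
      by_contra hij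
      exact disjoint_left.1 (disjoint_disjointed _ hij) (mem_preimage.1 hxD)
        (hxy ▸ mem_preimage.1 hyD)
    exact hinj i hxi hyj hxy
  · have hDi : ∀ i, F '' (s i ∩ F ⁻¹' D i) = D i := fun i => by
      rw [image_inter_preimage, inter_eq_right.2 (disjointed_subset (fun i => F '' s i) i)]
    rw [image_iUnion, iUnion_congr hDi]
    exact iUnion_disjointed

theorem exists_map_eq_of_injOn (hF : Continuous F) {S : Set α} (hS : MeasurableSet S)
    (hinj : InjOn F S) (m : Measure β) (hm : m (F '' S)ᶜ = 0) :
    ∃ σ : Measure α, σ.map F = m ∧ σ Sᶜ = 0 := by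
  have he := hF.continuousOn.measurableEmbedding hS hinj
  refine ⟨(Measure.comap (S.domRestrict F) m).map (↑), ?_, ?_⟩
  · rw [Measure.map_map hF.measurable measurable_subtype_coe]
    change (Measure.comap (S.domRestrict F) m).map (S.domRestrict F) = m
    rw [he.map_comap, range_domRestrict]
    exact Measure.restrict_eq_self_of_ae_mem (measure_mono_null (fun _ h => h) hm)
  · rw [Measure.map_apply measurable_subtype_coe hS.compl]
    simp

end Pullback

section Jacobian

variable {E : Type*} [NormedAddCommGroup E] [NormedSpace ℝ E] [FiniteDimensional ℝ E]
  {F : E → E}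

theorem ContDiff.exists_isOpen_injOn_of_det_ne_zero (hF : ContDiff ℝ 1 F) {x : E}
    (hx : (fderiv ℝ F x).det ≠ 0) : ∃ U, IsOpen U ∧ x ∈ U ∧ InjOn F U := by
  have hstrict : HasStrictFDerivAt F
      ((fderiv ℝ F x).toContinuousLinearEquivOfDetNeZero hx : E →L[ℝ] E) x := by
    rw [ContinuousLinearMap.coe_toContinuousLinearEquivOfDetNeZero]
    exact hF.contDiffAt.hasStrictFDerivAt one_ne_zero
  have hinj := (hstrict.toOpenPartialHomeomorph F).injOn
  rw [hstrict.toOpenPartialHomeomorph_coe] at hinj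
  exact ⟨_, (hstrict.toOpenPartialHomeomorph F).open_source,
    hstrict.mem_toOpenPartialHomeomorph_source, hinj⟩

variable [MeasurableSpace E] [BorelSpace E] (μ : Measure E) [μ.IsAddHaarMeasure]

theorem ContDiff.exists_measurableSet_injOn_measure_image_diff_eq_zero (hF : ContDiff ℝ 1 F)
    {C : Set E} (hC : MeasurableSet C) :
    ∃ S ⊆ C, MeasurableSet S ∧ InjOn F S ∧ μ (F '' C \ F '' S) = 0 := by
  obtain ⟨U, hUopen, hUinj, hcover⟩ :=
    exists_countable_isOpen_injOn_cover (s := {x | (fderiv ℝ F x).det ≠ 0})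
      fun x hx => hF.exists_isOpen_injOn_of_det_ne_zero hx
  obtain ⟨S, hSsub, hS, hSinj, hSimage⟩ :=
    exists_measurableSet_injOn_image_eq_iUnion hF.continuous (s := fun i => C ∩ U i)
      (fun i => hC.inter (hUopen i).measurableSet) fun i => (hUinj i).mono inter_subset_right
  refine ⟨S, hSsub.trans (iUnion_subset fun i => inter_subset_left), hS, hSinj, ?_⟩
  have hcrit : μ (F '' (C ∩ {x | (fderiv ℝ F x).det = 0})) = 0 :=
    addHaar_image_eq_zero_of_det_fderivWithin_eq_zero μ
      (fun x _ => (hF.differentiable one_ne_zero x).hasFDerivAt.hasFDerivWithinAt)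
      fun x hx => hx.2
  refine measure_mono_null ?_ hcrit
  rintro _ ⟨⟨x, hxC, rfl⟩, hxS⟩
  refine ⟨x, ⟨hxC, ?_⟩, rfl⟩
  by_contra hdet
  obtain ⟨i, hi⟩ := mem_iUnion.1 (hcover hdet)
  exact hxS (hSimage ▸ mem_iUnion_of_mem i (mem_image_of_mem F ⟨hxC, hi⟩))

variable {μ} in
theorem ContDiff.exists_map_eq (hF : ContDiff ℝ 1 F) {C : Set E} (hC : MeasurableSet C)
    {m : Measure E} (hac : m ≪ μ) (hm : m (F '' C)ᶜ = 0) :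
    ∃ σ : Measure E, σ.map F = m ∧ σ Cᶜ = 0 := by
  obtain ⟨S, hSC, hS, hSinj, hnull⟩ :=
    hF.exists_measurableSet_injOn_measure_image_diff_eq_zero μ hC
  have hmS : m (F '' S)ᶜ = 0 := by
    refine measure_mono_null (fun y hy => ?_) (measure_union_null hm (hac hnull))
    by_cases hyC : y ∈ F '' C
    · exact Or.inr ⟨hyC, hy⟩
    · exact Or.inl hyC
  obtain ⟨σ, hmap, hσ⟩ := exists_map_eq_of_injOn hF.continuous hS hSinj m hmS
  exact ⟨σ, hmap, measure_mono_null (compl_subset_compl.2 hSC) hσ⟩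

variable {μ} in
theorem ContDiff.exists_map_eq_restrict (hF : ContDiff ℝ 1 F) {C B : Set E}
    (hC : MeasurableSet C) (hB : MeasurableSet B) (hBC : B ⊆ F '' C) :
    ∃ σ : Measure E, σ.map F = μ.restrict B ∧ σ Cᶜ = 0 := by
  refine hF.exists_map_eq hC (Measure.absolutelyContinuous_of_le Measure.restrict_le_self) ?_
  rw [Measure.restrict_apply' hB]
  exact measure_mono_null (fun x hx => hx.1 (hBC hx.2)) measure_empty

end Jacobian

section Occupation

variable {α : Type*} [MeasurableSpace α] {f : α → α}

noncomputable def occupationMeasure (f : α → α) (σ : ℕ → Measure α) : Measure α :=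
  Measure.sum fun t => ∑ s ∈ Finset.range t, (σ t).map f^[s]

theorem sum_map_iterate_add_occupationMeasure (hf : Measurable f) (σ : ℕ → Measure α) :
    (Measure.sum fun t => (σ t).map f^[t]) + occupationMeasure f σ =
      (occupationMeasure f σ).map f + Measure.sum σ := by
  rw [occupationMeasure, Measure.map_sum hf.aemeasurable, Measure.sum_add_sum,
    Measure.sum_add_sum]
  congr 1
  funext t
  rw [Measure.map_finset_sum hf.aemeasurable, add_comm, ← Finset.sum_range_succ,
    Finset.sum_range_succ', Function.iterate_zero, Measure.map_id]
  congr 1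
  refine Finset.sum_congr rfl fun s _ => ?_
  rw [Measure.map_map hf (hf.iterate s), ← Function.iterate_succ']

theorem occupationMeasure_apply_univ (hf : Measurable f) (σ : ℕ → Measure α) :
    occupationMeasure f σ univ = ∑' t, t * σ t univ := by
  simp [occupationMeasure, Measure.map_apply (hf.iterate _) MeasurableSet.univ]

theorem occupationMeasure_apply_compl_eq_zero (hf : Measurable f) {σ : ℕ → Measure α}
    {C K : Set α} (hσ : ∀ t, σ t Cᶜ = 0) (hK : MeasurableSet K)
    (hCK : ∀ s, MapsTo f^[s] C K) :
    occupationMeasure f σ Kᶜ = 0 := by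
  simp only [occupationMeasure, Measure.sum_apply _ hK.compl, Measure.coe_finsetSum,
    Finset.sum_apply, Measure.map_apply (hf.iterate _) hK.compl]
  exact ENNReal.tsum_eq_zero.2 fun t => Finset.sum_eq_zero fun s _ =>
    measure_mono_null (fun x hx hxC => hx (hCK s hxC)) (hσ t)

theorem measure_compl_eq_zero_of_add_eq_map_add (hf : Measurable f) {μ μ₀ ν : Measure α}
    [IsFiniteMeasure ν] (h : μ + ν = ν.map f + μ₀) {K : Set α} (hK : MeasurableSet K)
    (hfK : MapsTo f K K) (hμ₀ : μ₀ Kᶜ = 0) : μ Kᶜ = 0 := by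
  have hcompl := congrArg (fun ρ : Measure α => ρ Kᶜ) h
  simp only [Measure.add_apply, Measure.map_apply hf hK.compl, hμ₀, add_zero] at hcompl
  have hle : μ Kᶜ + ν Kᶜ ≤ 0 + ν Kᶜ := by
    rw [hcompl, zero_add]
    exact measure_mono fun x hx hxK => hx (hfK hxK)
  exact nonpos_iff_eq_zero.1 (ENNReal.le_of_add_le_add_right (measure_ne_top ν _) hle)

end Occupation

theorem eq_disjointed_of_eq_diff_biUnion {α : Type*} {A Y : ℕ → Set α} (hY0 : Y 0 = A 0)
    (hY : ∀ t, 1 ≤ t → Y t = A t \ ⋃ s ∈ Finset.range t, A s) : Y = disjointed A := by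
  funext t
  rcases Nat.eq_zero_or_pos t with rfl | ht
  · rw [hY0, disjointed_zero]
  · rw [hY t ht, disjointed_apply, Nat.Iio_eq_range, Finset.sup_set_eq_biUnion]

theorem ENNReal.exists_nat_le_mul {a b : ℝ≥0∞} (ha : a ≠ ⊤) (hb : b = 0 → a = 0) :
    ∃ N : ℕ, a ≤ N * b := by
  rcases eq_or_ne b 0 with rfl | hb0
  · exact ⟨0, by simp [hb rfl]⟩
  · obtain ⟨N, hN⟩ := ENNReal.exists_nat_mul_gt hb0 ha
    exact ⟨N, hN.le⟩

def reachableSet {α : Type*} (f : α → α) (s : Set α) : Set α := ⋃ t : ℕ, f^[t] '' s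

theorem mapsTo_reachableSet {α : Type*} (f : α → α) (s : Set α) :
    MapsTo f (reachableSet f s) (reachableSet f s) := by
  rintro _ ⟨_, ⟨t, rfl⟩, x, hx, rfl⟩
  exact mem_iUnion_of_mem (t + 1) ⟨x, hx, Function.iterate_succ_apply' f t x⟩

theorem subset_reachableSet {α : Type*} (f : α → α) (s : Set α) : s ⊆ reachableSet f s :=
  subset_iUnion_of_subset 0 (by simp)

theorem measurableSet_reachableSet {α : Type*} [TopologicalSpace α] [T2Space α]
    [MeasurableSpace α] [OpensMeasurableSpace α] {f : α → α} (hf : Continuous f) {s : Set α}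
    (hs : IsCompact s) : MeasurableSet (reachableSet f s) :=
  .iUnion fun t => (hs.image (hf.iterate t)).measurableSet

section PrimalLP

variable {n : ℕ} {f : (Fin n → ℝ) → (Fin n → ℝ)} {X0 X : Set (Fin n → ℝ)} {T : ℕ}
  {μ₀ μ μh ν : Measure (Fin n → ℝ)} {a : ℝ≥0∞}

theorem PrimalFeasible.le_restrict_closure (hf : Continuous f)
    (h : PrimalFeasible n f X0 X T μ₀ μ μh ν a) :
    μ ≤ volume.restrict (closure (reachableSet f X0)) := by
  obtain ⟨-, -, -, hν, hμ₀, -, -, -, -, hliou, hlam⟩ := h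
  set K := closure (reachableSet f X0)
  have hK : μ Kᶜ = 0 :=
    measure_compl_eq_zero_of_add_eq_map_add hf.measurable hliou isClosed_closure.measurableSet
      ((mapsTo_reachableSet f X0).closure hf)
      (measure_mono_null (compl_subset_compl.2 ((subset_reachableSet f X0).trans subset_closure))
        hμ₀)
  calc μ = μ.restrict K := (Measure.restrict_eq_self_of_ae_mem (ae_iff.2 hK)).symm
    _ ≤ (volume.restrict X).restrict K :=
      Measure.restrict_mono subset_rfl (hlam ▸ Measure.le_add_right le_rfl)
    _ ≤ volume.restrict K := Measure.restrict_mono subset_rfl Measure.restrict_le_self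

theorem primalValue_le (hf : Continuous f)
    (hclos : volume (reachableSet f X0) = volume (closure (reachableSet f X0))) :
    primalValue n f X0 X T ≤ volume (reachableSet f X0) := by
  refine sSup_le ?_
  rintro _ ⟨μ₀, μ, μh, ν, a, h, rfl⟩
  simpa [hclos] using h.le_restrict_closure hf univ

theorem PrimalFeasible.eq_restrict_of_measure_univ_eq (hf : Continuous f) (hX0 : IsCompact X0)
    (hclos : volume (reachableSet f X0) = volume (closure (reachableSet f X0)))
    (h : PrimalFeasible n f X0 X T μ₀ μ μh ν a) (hμ : μ univ = volume (reachableSet f X0)) :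
    μ = volume.restrict (reachableSet f X0) := by
  have : IsFiniteMeasure μ := h.2.1
  rw [Measure.eq_of_le_of_measure_univ_eq (h.le_restrict_closure hf) (by simp [hμ, hclos])]
  refine Measure.restrict_congr_set (ae_eq_of_subset_of_measure_ge subset_closure hclos.ge
    ?_ (hclos ▸ hμ ▸ measure_ne_top μ univ)).symm
  exact (measurableSet_reachableSet hf hX0).nullMeasurableSet

theorem primalFeasible_restrict_reachableSet (hf : Continuous f) (hX0 : IsCompact X0)
    (hX : IsCompact X) (hreach : reachableSet f X0 ⊆ X) {σ : ℕ → Measure (Fin n → ℝ)}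
    (hσ : ∀ t, (σ t).map f^[t] = volume.restrict (disjointed (fun t => f^[t] '' X0) t))
    (hσX0 : ∀ t, σ t X0ᶜ = 0)
    (hT : ∑' t : ℕ, (t : ℝ≥0∞) * volume (disjointed (fun t => f^[t] '' X0) t) ≤ T * volume X) :
    PrimalFeasible n f X0 X T (Measure.sum σ) (volume.restrict (reachableSet f X0))
      (volume.restrict (X \ reachableSet f X0)) (occupationMeasure f σ)
      (T * volume X - ∑' t : ℕ, (t : ℝ≥0∞) * volume (disjointed (fun t => f^[t] '' X0) t)) := by
  set Y := disjointed fun t => f^[t] '' X0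
  have hY : ∀ t, MeasurableSet (Y t) :=
    MeasurableSet.disjointed fun t => (hX0.image (hf.iterate t)).measurableSet
  have hXmeas : MeasurableSet X := hX.isClosed.measurableSet
  have hvolX : volume X < ⊤ := hX.measure_lt_top
  have hσuniv : ∀ t, σ t univ = volume (Y t) := fun t => by
    simpa [Measure.map_apply (hf.iterate t).measurable .univ] using congrArg (· univ) (hσ t)
  have hrestrict :
      volume.restrict (reachableSet f X0) = Measure.sum fun t => (σ t).map f^[t] := by
    simp_rw [hσ]
    rw [← Measure.restrict_iUnion (disjoint_disjointed _) hY, iUnion_disjointed]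
    rfl
  have hνuniv : occupationMeasure f σ univ = ∑' t : ℕ, (t : ℝ≥0∞) * volume (Y t) := by
    simp [occupationMeasure_apply_univ hf.measurable, hσuniv]
  refine ⟨⟨?_⟩, ⟨?_⟩, ⟨?_⟩, ⟨?_⟩, ?_, ?_, ?_, ?_, ?_, ?_, ?_⟩
  · rw [Measure.sum_apply _ .univ]
    simp_rw [hσuniv]
    rw [← measure_iUnion (disjoint_disjointed _) hY, iUnion_disjointed]
    exact (measure_mono hreach).trans_lt hvolX
  · simpa using (measure_mono hreach).trans_lt hvolX
  · simpa using (measure_mono sdiff_subset).trans_lt hvolX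
  · rw [hνuniv]
    exact hT.trans_lt (ENNReal.mul_lt_top (ENNReal.natCast_lt_top T) hvolX)
  · simp [Measure.sum_apply _ hX0.isClosed.measurableSet.compl, hσX0]
  · rw [Measure.restrict_apply hXmeas.compl]
    exact measure_mono_null (fun x hx => hx.1 (hreach hx.2)) measure_empty
  · rw [Measure.restrict_apply hXmeas.compl]
    exact measure_mono_null (fun x hx => hx.1 hx.2.1) measure_empty
  · exact occupationMeasure_apply_compl_eq_zero hf.measurable hσX0 hXmeas
      fun s x hx => hreach (mem_iUnion_of_mem s (mem_image_of_mem _ hx))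
  · rw [hνuniv]
    exact add_tsub_cancel_of_le hT
  · rw [hrestrict]
    exact sum_map_iterate_add_occupationMeasure hf.measurable σ
  · rw [← Measure.restrict_union disjoint_sdiff_right
      (hXmeas.diff (measurableSet_reachableSet hf hX0)), union_sdiff_cancel hreach]

end PrimalLP

theorem primal_unique_optimum_general (n : ℕ)
    (f : (Fin n → ℝ) → (Fin n → ℝ))
    (hfpoly : ∀ i, ∃ p : MvPolynomial (Fin n) ℝ, ∀ x, f x i = MvPolynomial.eval x p)
    (X0 X : Set (Fin n → ℝ)) (hX0 : IsCompact X0) (hX : IsCompact X)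
    (hreach : (⋃ t : ℕ, f^[t] '' X0) ⊆ X)
    (Y : ℕ → Set (Fin n → ℝ))
    (hY0 : Y 0 = X0)
    (hYt : ∀ t : ℕ, 1 ≤ t → Y t = f^[t] '' X0 \ ⋃ s ∈ Finset.range t, f^[s] '' X0)
    (hsum : (∑' t : ℕ, (t : ℝ≥0∞) * volume (Y t)) < ⊤)
    (hclos : volume (⋃ t : ℕ, f^[t] '' X0) = volume (closure (⋃ t : ℕ, f^[t] '' X0))) :
    ∃ T₀ : ℕ, ∀ T : ℕ, T₀ ≤ T → 1 ≤ T →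
      (∃ μ₀ μ μh ν a, PrimalFeasible n f X0 X T μ₀ μ μh ν a ∧
        μ Set.univ = primalValue n f X0 X T ∧
        μ = volume.restrict (⋃ t : ℕ, f^[t] '' X0)) ∧
      (∀ μ₀ μ μh ν a, PrimalFeasible n f X0 X T μ₀ μ μh ν a →
        μ Set.univ = primalValue n f X0 X T →
        μ = volume.restrict (⋃ t : ℕ, f^[t] '' X0)) ∧
      primalValue n f X0 X T = volume (⋃ t : ℕ, f^[t] '' X0) := by
  have hf : ContDiff ℝ 1 f := contDiff_pi.2 fun i => by
    obtain ⟨p, hp⟩ := hfpoly i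
    simpa only [hp] using p.contDiff_eval
  obtain rfl := eq_disjointed_of_eq_diff_biUnion (by simpa using hY0) hYt
  obtain ⟨T₀, hT₀⟩ := ENNReal.exists_nat_le_mul (b := volume X) hsum.ne fun hXvol =>
    ENNReal.tsum_eq_zero.2 fun t => by
      simp [measure_mono_null ((disjointed_subset (fun s => f^[s] '' X0) t).trans
        ((subset_iUnion (fun s => f^[s] '' X0) t).trans hreach)) hXvol]
  choose σ hσ hσX0 using fun t => (hf.iterate t).exists_map_eq_restrict (μ := volume)
    hX0.isClosed.measurableSet
    (MeasurableSet.disjointed (fun t => (hX0.image (hf.continuous.iterate t)).measurableSet) t)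
    (disjointed_subset _ t)
  refine ⟨T₀, fun T hT _ => ?_⟩
  have hfeas := primalFeasible_restrict_reachableSet (T := T) hf.continuous hX0 hX hreach
    hσ hσX0 (hT₀.trans (by gcongr))
  have hval : primalValue n f X0 X T = volume (reachableSet f X0) :=
    (primalValue_le hf.continuous hclos).antisymm (le_sSup ⟨_, _, _, _, _, hfeas, by simp⟩)
  exact ⟨⟨_, _, _, _, _, hfeas, by simp [hval], rfl⟩,
    fun _ _ _ _ _ h hμ =>
      h.eq_restrict_of_measure_univ_eq hf.continuous hX0 hclos (hμ.trans hval),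
    hval⟩

/-- If `∑_{t} t · vol Y^t < ∞` and `vol X^∞ = vol cl(X^∞)`, then for all large enough `T`
the primal LP has an optimal solution with `μ* = λ_{X^∞}`, every optimal solution has this
second component, and `p^T = vol X^∞`. -/
theorem primal_unique_optimum (n : ℕ) (hn : 1 ≤ n)
    (f : (Fin n → ℝ) → (Fin n → ℝ))
    (hfpoly : ∀ i, ∃ p : MvPolynomial (Fin n) ℝ, ∀ x, f x i = MvPolynomial.eval x p)
    (X0 X : Set (Fin n → ℝ)) (hX0 : IsCompact X0) (hX : IsCompact X)
    (hreach : (⋃ t : ℕ, f^[t] '' X0) ⊆ X)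
    (Y : ℕ → Set (Fin n → ℝ))
    (hY0 : Y 0 = X0)
    (hYt : ∀ t : ℕ, 1 ≤ t → Y t = f^[t] '' X0 \ ⋃ s ∈ Finset.range t, f^[s] '' X0)
    (hsum : (∑' t : ℕ, (t : ℝ≥0∞) * volume (Y t)) < ⊤)
    (hclos : volume (⋃ t : ℕ, f^[t] '' X0) = volume (closure (⋃ t : ℕ, f^[t] '' X0))) :
    ∃ T₀ : ℕ, ∀ T : ℕ, T₀ ≤ T → 1 ≤ T →
      (∃ μ₀ μ μh ν a, PrimalFeasible n f X0 X T μ₀ μ μh ν a ∧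
        μ Set.univ = primalValue n f X0 X T ∧
        μ = volume.restrict (⋃ t : ℕ, f^[t] '' X0)) ∧
      (∀ μ₀ μ μh ν a, PrimalFeasible n f X0 X T μ₀ μ μh ν a →
        μ Set.univ = primalValue n f X0 X T →
        μ = volume.restrict (⋃ t : ℕ, f^[t] '' X0)) ∧
      primalValue n f X0 X T = volume (⋃ t : ℕ, f^[t] '' X0) :=
  primal_unique_optimum_general n f hfpoly X0 X hX0 hX hreach Y hY0 hYt hsum hclos
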